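/- arXiv:2010.14471 — 3 statements merged into one kernel-verified Lean document; each statement's English description precedes it below -/
import Mathlib

section
/- Let V ⊆ ℝⁿ be a compact convex set and F : V → ℝ a continuous quasi-convex function. Suppose there exist r > 0 and M ≥ 1 such that for all v₀, v₁ ∈ V with |v₁ - v₀| ≤ r and all t ∈ [0,1], F(v_t) - F(v₀) ≤ M t (F(v₁) - F(v₀))₊. Then there exists M' ≥ 1 (depending only on M, r, and diam(V)) such that for all v₀, v₁ ∈ V and all t ∈ [0,1], F(v_t) - F(v₀) ≤ M' t (F(v₁) - F(v₀))₊. -/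
/-!
On a segment `[v₀, v₁]` longer than `r`, apply the local estimate on the initial piece
`[v₀, v_s]` of length `r`: for `t ≤ s` this costs a factor `1 / s ≈ diam V / r`, because
quasi-convexity bounds the increment `F v_s - F v₀` by `(F v₁ - F v₀)₊`. For `t > s`
quasi-convexity alone bounds the increment by `(F v₁ - F v₀)₊ ≤ (t / s) (F v₁ - F v₀)₊`.
-/

open Set

lemma sub_le_max_sub_zero_of_le_max {a b c : ℝ} (h : a ≤ max b c) : a - b ≤ max (c - b) 0 := by
  rcases le_max_iff.1 h with h | h
  · exact (sub_nonpos.2 h).trans (le_max_right _ _)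
  · exact (sub_le_sub_right h b).trans (le_max_left _ _)

section

variable {E : Type*} [NormedAddCommGroup E] [NormedSpace ℝ E] {V : Set E} {F : E → ℝ}

theorem sub_le_mul_div_of_local_quasiconvex (hV : Convex ℝ V)
    (hQC : ∀ v₀ ∈ V, ∀ v₁ ∈ V, ∀ t ∈ Icc (0:ℝ) 1,
      F ((1 - t) • v₀ + t • v₁) ≤ max (F v₀) (F v₁))
    {r M : ℝ} (hM : 1 ≤ M)
    (hloc : ∀ v₀ ∈ V, ∀ v₁ ∈ V, ‖v₁ - v₀‖ ≤ r → ∀ t ∈ Icc (0:ℝ) 1,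
      F ((1 - t) • v₀ + t • v₁) - F v₀ ≤ M * t * max (F v₁ - F v₀) 0)
    {v₀ v₁ : E} (hv₀ : v₀ ∈ V) (hv₁ : v₁ ∈ V) {s : ℝ} (hs : s ∈ Ioc (0:ℝ) 1)
    (hsr : s * ‖v₁ - v₀‖ ≤ r) {t : ℝ} (ht : t ∈ Icc (0:ℝ) 1) :
    F ((1 - t) • v₀ + t • v₁) - F v₀ ≤ M * (t / s) * max (F v₁ - F v₀) 0 := by
  obtain ⟨hs0, hs1⟩ := hs
  have hP : 0 ≤ max (F v₁ - F v₀) 0 := le_max_right _ _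
  have hinc : ∀ u ∈ Icc (0:ℝ) 1,
      F ((1 - u) • v₀ + u • v₁) - F v₀ ≤ max (F v₁ - F v₀) 0 := fun u hu =>
    sub_le_max_sub_zero_of_le_max (hQC v₀ hv₀ v₁ hv₁ u hu)
  rcases le_or_gt t s with hts | hst
  · set w := (1 - s) • v₀ + s • v₁
    have hwV : w ∈ V := hV hv₀ hv₁ (by linarith) hs0.le (by ring)
    have hw : ‖w - v₀‖ ≤ r := by
      have : w - v₀ = s • (v₁ - v₀) := by module
      rwa [this, norm_smul, Real.norm_of_nonneg hs0.le]
    have hτ : t / s ∈ Icc (0:ℝ) 1 := ⟨div_nonneg ht.1 hs0.le, (div_le_one hs0).2 hts⟩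
    have hvt : (1 - t / s) • v₀ + (t / s) • w = (1 - t) • v₀ + t • v₁ := by
      rw [show (1 - t / s) • v₀ + (t / s) • w = (1 - t / s * s) • v₀ + (t / s * s) • v₁ by
        module, div_mul_cancel₀ t hs0.ne']
    calc F ((1 - t) • v₀ + t • v₁) - F v₀
        ≤ M * (t / s) * max (F w - F v₀) 0 := hvt ▸ hloc v₀ hv₀ w hwV hw _ hτ
      _ ≤ M * (t / s) * max (F v₁ - F v₀) 0 :=
        mul_le_mul_of_nonneg_left (max_le (hinc s ⟨hs0.le, hs1⟩) hP)
          (mul_nonneg (by linarith) hτ.1)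
  · have h1 : 1 ≤ M * (t / s) :=
      one_le_mul_of_one_le_of_one_le hM ((one_le_div hs0).2 hst.le)
    calc F ((1 - t) • v₀ + t • v₁) - F v₀ ≤ max (F v₁ - F v₀) 0 := hinc t ht
      _ ≤ M * (t / s) * max (F v₁ - F v₀) 0 := le_mul_of_one_le_left hP h1

end

theorem stmt_2_general {n : ℕ} (V : Set (EuclideanSpace ℝ (Fin n)))
    (hVc : IsCompact V) (hV : Convex ℝ V)
    (F : EuclideanSpace ℝ (Fin n) → ℝ)
    (hQC : ∀ v₀ ∈ V, ∀ v₁ ∈ V, ∀ t ∈ Set.Icc (0:ℝ) 1,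
      F ((1 - t) • v₀ + t • v₁) ≤ max (F v₀) (F v₁))
    (r M : ℝ) (hr : 0 < r) (hM : 1 ≤ M)
    (hloc : ∀ v₀ ∈ V, ∀ v₁ ∈ V, ‖v₁ - v₀‖ ≤ r → ∀ t ∈ Set.Icc (0:ℝ) 1,
      F ((1 - t) • v₀ + t • v₁) - F v₀ ≤ M * t * max (F v₁ - F v₀) 0) :
    ∃ M' : ℝ, 1 ≤ M' ∧ ∀ v₀ ∈ V, ∀ v₁ ∈ V, ∀ t ∈ Set.Icc (0:ℝ) 1,
      F ((1 - t) • v₀ + t • v₁) - F v₀ ≤ M' * t * max (F v₁ - F v₀) 0 := by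
  -- Segments are cut at the fraction `s = r / max r (diam V)`, of length at most `r`.
  set R := max r (Metric.diam V)
  have hR : 0 < R := hr.trans_le (le_max_left _ _)
  refine ⟨M * (R / r), one_le_mul_of_one_le_of_one_le hM ((one_le_div hr).2 (le_max_left _ _)),
    fun v₀ hv₀ v₁ hv₁ t ht => ?_⟩
  have hs : r / R ∈ Ioc (0:ℝ) 1 := ⟨div_pos hr hR, (div_le_one hR).2 (le_max_left _ _)⟩
  have hsr : r / R * ‖v₁ - v₀‖ ≤ r := by
    have hd : ‖v₁ - v₀‖ ≤ R := (dist_eq_norm v₁ v₀ ▸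
      Metric.dist_le_diam_of_mem hVc.isBounded hv₁ hv₀).trans (le_max_right _ _)
    calc r / R * ‖v₁ - v₀‖ ≤ r / R * R := by gcongr
      _ = r := div_mul_cancel₀ r hR.ne'
  refine (sub_le_mul_div_of_local_quasiconvex hV hQC hM hloc hv₀ hv₁ hs hsr ht).trans_eq ?_
  field_simp

/-- Local quantitative quasi-convexity at scales `≤ r` upgrades to global
quantitative quasi-convexity with a worse constant. -/
theorem stmt_2 {n : ℕ} (V : Set (EuclideanSpace ℝ (Fin n)))
    (hVc : IsCompact V) (hV : Convex ℝ V)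
    (F : EuclideanSpace ℝ (Fin n) → ℝ) (hFcont : ContinuousOn F V)
    (hQC : ∀ v₀ ∈ V, ∀ v₁ ∈ V, ∀ t ∈ Set.Icc (0:ℝ) 1,
      F ((1 - t) • v₀ + t • v₁) ≤ max (F v₀) (F v₁))
    (r M : ℝ) (hr : 0 < r) (hM : 1 ≤ M)
    (hloc : ∀ v₀ ∈ V, ∀ v₁ ∈ V, ‖v₁ - v₀‖ ≤ r → ∀ t ∈ Set.Icc (0:ℝ) 1,
      F ((1 - t) • v₀ + t • v₁) - F v₀ ≤ M * t * max (F v₁ - F v₀) 0) :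
    ∃ M' : ℝ, 1 ≤ M' ∧ ∀ v₀ ∈ V, ∀ v₁ ∈ V, ∀ t ∈ Set.Icc (0:ℝ) 1,
      F ((1 - t) • v₀ + t • v₁) - F v₀ ≤ M' * t * max (F v₁ - F v₀) 0 :=
  stmt_2_general V hVc hV F hQC r M hr hM hloc
end

section
/- Let F : B_r(v₀) → ℝ be C¹ with |∇F(v) - ∇F(v₀)| ≤ (1/(2k))|∇F(v₀)| for all v ∈ B_r(v₀), where k ≥ 1. If v₁ ∈ B_r(v₀) satisfies ⟨v₁ - v₀, ∇F(v₀)⟩ ≥ (1/k)|v₁ - v₀||∇F(v₀)|, then for all t ∈ [0,1], F(v_t) - F(v₀) ≤ 5 t (F(v₁) - F(v₀)) where v_t = (1-t)v₀ + t v₁. -/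
open scoped RealInnerProductSpace

/-!
The first-order Taylor error of `F` along the segment is controlled by the oscillation of the
gradient (mean value inequality for `F - ⟪·, ∇F(v₀)⟫`): with `D = ⟪v₁ - v₀, ∇F(v₀)⟫` and
`δ = ‖∇F(v₀)‖ ‖v₁ - v₀‖ / (2k)`, this gives `F(v_t) - F(v₀) ≤ t (D + δ)` and
`F(v₁) - F(v₀) ≥ D - δ`. The cone condition says `2δ ≤ D`, whence `D + δ ≤ 5 (D - δ)`.
-/

section

variable {E : Type*} [NormedAddCommGroup E] [InnerProductSpace ℝ E] [CompleteSpace E]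
  {f : E → ℝ} {s : Set E} {a b x : E} {ε : ℝ}

theorem Convex.abs_sub_sub_inner_gradient_le (hs : Convex ℝ s)
    (hf : ∀ y ∈ s, DifferentiableAt ℝ f y) (bound : ∀ y ∈ s, ‖gradient f y - gradient f a‖ ≤ ε)
    (ha : a ∈ s) (hx : x ∈ s) : |f x - f a - ⟪x - a, gradient f a⟫| ≤ ε * ‖x - a‖ := by
  have bound' : ∀ y ∈ s, ‖fderiv ℝ f y - fderiv ℝ f a‖ ≤ ε := fun y hy ↦ by
    rw [← toDual_gradient, ← toDual_gradient, ← map_sub, LinearIsometryEquiv.norm_map]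
    exact bound y hy
  have key := hs.norm_image_sub_le_of_norm_fderiv_le' hf bound' ha hx
  rwa [← toDual_gradient, InnerProductSpace.toDual_apply_apply, real_inner_comm,
    Real.norm_eq_abs] at key

theorem Convex.abs_sub_sub_inner_gradient_le_segment (hs : Convex ℝ s)
    (hf : ∀ y ∈ s, DifferentiableAt ℝ f y) (bound : ∀ y ∈ s, ‖gradient f y - gradient f a‖ ≤ ε)
    (ha : a ∈ s) (hb : b ∈ s) {t : ℝ} (ht : t ∈ Set.Icc (0 : ℝ) 1) :
    |f ((1 - t) • a + t • b) - f a - t * ⟪b - a, gradient f a⟫| ≤ t * (ε * ‖b - a‖) := by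
  have hsub : (1 - t) • a + t • b - a = t • (b - a) := by module
  have key := hs.abs_sub_sub_inner_gradient_le hf bound ha
    (hs ha hb (sub_nonneg.2 ht.2) ht.1 (sub_add_cancel 1 t))
  rwa [hsub, real_inner_smul_left, norm_smul, Real.norm_of_nonneg ht.1, mul_left_comm] at key

end

theorem stmt_10_general {n : ℕ} (v₀ v₁ : EuclideanSpace ℝ (Fin n)) (r k : ℝ)
    (F : EuclideanSpace ℝ (Fin n) → ℝ)
    (hF : ContDiffOn ℝ 1 F (Metric.ball v₀ r))
    (hosc : ∀ v ∈ Metric.ball v₀ r,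
      ‖gradient F v - gradient F v₀‖ ≤ (1 / (2 * k)) * ‖gradient F v₀‖)
    (hv₁ : v₁ ∈ Metric.ball v₀ r)
    (hcone : (1 / k) * ‖v₁ - v₀‖ * ‖gradient F v₀‖ ≤ ⟪v₁ - v₀, gradient F v₀⟫) :
    ∀ t ∈ Set.Icc (0:ℝ) 1,
      F ((1 - t) • v₀ + t • v₁) - F v₀ ≤ 5 * t * (F v₁ - F v₀) := by
  intro t ht
  have hv₀ : v₀ ∈ Metric.ball v₀ r := Metric.mem_ball_self (dist_nonneg.trans_lt hv₁)
  have hdiff : ∀ v ∈ Metric.ball v₀ r, DifferentiableAt ℝ F v := fun v hv ↦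
    (hF.differentiableOn one_ne_zero).differentiableAt (Metric.isOpen_ball.mem_nhds hv)
  have taylor : ∀ t ∈ Set.Icc (0 : ℝ) 1, _ := fun t ht ↦
    Convex.abs_sub_sub_inner_gradient_le_segment (convex_ball v₀ r) hdiff hosc hv₀ hv₁ ht
  have at_t := abs_le.1 (taylor t ht)
  have at_one := abs_le.1 (taylor 1 (Set.right_mem_Icc.2 zero_le_one))
  simp only [sub_self, zero_smul, one_smul, zero_add, one_mul] at at_one
  set δ := 1 / (2 * k) * ‖gradient F v₀‖ * ‖v₁ - v₀‖
  set D := ⟪v₁ - v₀, gradient F v₀⟫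
  have hδ : 0 ≤ δ := mul_nonneg ((norm_nonneg _).trans (hosc v₀ hv₀)) (norm_nonneg _)
  have hδD : 2 * δ ≤ D := by linarith [show 2 * δ = 1 / k * ‖v₁ - v₀‖ * ‖gradient F v₀‖ by ring]
  calc F ((1 - t) • v₀ + t • v₁) - F v₀ ≤ t * (D + δ) := by linarith [at_t.2]
    _ ≤ t * (5 * (D - δ)) := mul_le_mul_of_nonneg_left (by linarith) ht.1
    _ ≤ 5 * t * (F v₁ - F v₀) := by nlinarith [at_one.1, ht.1]

/-- Quantitative quasi-convexity with constant `5` along directions in the cone of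
aperture `1/k` around `∇F(v₀)`. -/
theorem stmt_10 {n : ℕ} (v₀ v₁ : EuclideanSpace ℝ (Fin n)) (r k : ℝ)
    (hk : 1 ≤ k) (hr : 0 < r)
    (F : EuclideanSpace ℝ (Fin n) → ℝ)
    (hF : ContDiffOn ℝ 1 F (Metric.ball v₀ r))
    (hosc : ∀ v ∈ Metric.ball v₀ r,
      ‖gradient F v - gradient F v₀‖ ≤ (1 / (2 * k)) * ‖gradient F v₀‖)
    (hv₁ : v₁ ∈ Metric.ball v₀ r)
    (hcone : (1 / k) * ‖v₁ - v₀‖ * ‖gradient F v₀‖ ≤ ⟪v₁ - v₀, gradient F v₀⟫) :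
    ∀ t ∈ Set.Icc (0:ℝ) 1,
      F ((1 - t) • v₀ + t • v₁) - F v₀ ≤ 5 * t * (F v₁ - F v₀) :=
  stmt_10_general v₀ v₁ r k F hF hosc hv₁ hcone
end

section
/- Let F : V → ℝ be a C¹ quasi-convex function on an open convex set V ⊆ ℝⁿ with ∇F(v) ≠ 0 for all v. Let v₀ ∈ V, and let v₁ ∈ V satisfy ⟨v₁ - v₀, ∇F(v₀)⟩ < 0. Suppose there is t' ∈ (0,1) with F(v_{t'}) = F(v₀) and F(v_s) ≤ F(v₀) for s ∈ [0, t'], and suppose for some M ≥ 1 the inequality F(v_s) - F(v_{t'}) ≤ M ((s - t')/(1 - t'))(F(v₁) - F(v_{t'}))₊ holds for all s ∈ [t', 1]. Then for all s ∈ [0,1], F(v_s) - F(v₀) ≤ M s (F(v₁) - F(v₀))₊. -/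
open scoped RealInnerProductSpace

/-! On `[0, t']` the bound holds because the left side is nonpositive. On `[t', 1]` the
hypothesis applies with `F v_{t'} = F v₀`, and the rescaled time `(s - t') / (1 - t')` is at
most `s`. -/

lemma sub_div_one_sub_le_self {s t : ℝ} (ht₀ : 0 ≤ t) (ht₁ : t < 1) (hs : s ≤ 1) :
    (s - t) / (1 - t) ≤ s := by
  rw [div_le_iff₀ (sub_pos.mpr ht₁)]
  nlinarith

lemma sub_le_mul_max_of_le_rescaled {f : ℝ → ℝ} {a b t' M : ℝ} (ht' : t' ∈ Set.Ioo (0:ℝ) 1)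
    (hlevel : f t' = a) (hbelow : ∀ s ∈ Set.Icc (0:ℝ) t', f s ≤ a) (hM : 0 ≤ M)
    (hrescaled : ∀ s ∈ Set.Icc t' 1,
      f s - f t' ≤ M * ((s - t') / (1 - t')) * max (b - f t') 0) :
    ∀ s ∈ Set.Icc (0:ℝ) 1, f s - a ≤ M * s * max (b - a) 0 := by
  rintro s ⟨hs₀, hs₁⟩
  have hc : 0 ≤ max (b - a) 0 := le_max_right _ _
  rcases le_or_gt s t' with hst | hst
  · have := hbelow s ⟨hs₀, hst⟩
    have : 0 ≤ M * s * max (b - a) 0 := by positivity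
    linarith
  · calc f s - a ≤ M * ((s - t') / (1 - t')) * max (b - a) 0 := by
          simpa only [hlevel] using hrescaled s ⟨hst.le, hs₁⟩
      _ ≤ M * s * max (b - a) 0 := by
          gcongr
          exact sub_div_one_sub_le_self ht'.1.le ht'.2 hs₁

theorem stmt_14_general {n : ℕ}
    (F : EuclideanSpace ℝ (Fin n) → ℝ)
    (v₀ v₁ : EuclideanSpace ℝ (Fin n))
    (t' : ℝ) (ht' : t' ∈ Set.Ioo (0:ℝ) 1)
    (hlevel : F ((1 - t') • v₀ + t' • v₁) = F v₀)
    (hbelow : ∀ s ∈ Set.Icc (0:ℝ) t', F ((1 - s) • v₀ + s • v₁) ≤ F v₀)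
    (M : ℝ) (hM : 1 ≤ M)
    (hQQ : ∀ s ∈ Set.Icc t' 1,
      F ((1 - s) • v₀ + s • v₁) - F ((1 - t') • v₀ + t' • v₁) ≤
        M * ((s - t') / (1 - t')) *
          max (F v₁ - F ((1 - t') • v₀ + t' • v₁)) 0) :
    ∀ s ∈ Set.Icc (0:ℝ) 1,
      F ((1 - s) • v₀ + s • v₁) - F v₀ ≤ M * s * max (F v₁ - F v₀) 0 :=
  sub_le_mul_max_of_le_rescaled (f := fun s => F ((1 - s) • v₀ + s • v₁)) ht' hlevel hbelow
    (zero_le_one.trans hM) hQQ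

/-- Reduction of quantitative quasi-convexity along a segment leaving the sublevel
set of `v₀` to the sub-segment where `F` exceeds `F v₀`. -/
theorem stmt_14 {n : ℕ} (V : Set (EuclideanSpace ℝ (Fin n)))
    (hVo : IsOpen V) (hV : Convex ℝ V)
    (F : EuclideanSpace ℝ (Fin n) → ℝ) (hF : ContDiffOn ℝ 1 F V)
    (hQC : ∀ a ∈ V, ∀ b ∈ V, ∀ t ∈ Set.Icc (0:ℝ) 1,
      F ((1 - t) • a + t • b) ≤ max (F a) (F b))
    (hgrad : ∀ v ∈ V, gradient F v ≠ 0)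
    (v₀ v₁ : EuclideanSpace ℝ (Fin n)) (hv₀ : v₀ ∈ V) (hv₁ : v₁ ∈ V)
    (hdir : ⟪v₁ - v₀, gradient F v₀⟫ < 0)
    (t' : ℝ) (ht' : t' ∈ Set.Ioo (0:ℝ) 1)
    (hlevel : F ((1 - t') • v₀ + t' • v₁) = F v₀)
    (hbelow : ∀ s ∈ Set.Icc (0:ℝ) t', F ((1 - s) • v₀ + s • v₁) ≤ F v₀)
    (M : ℝ) (hM : 1 ≤ M)
    (hQQ : ∀ s ∈ Set.Icc t' 1,
      F ((1 - s) • v₀ + s • v₁) - F ((1 - t') • v₀ + t' • v₁) ≤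
        M * ((s - t') / (1 - t')) *
          max (F v₁ - F ((1 - t') • v₀ + t' • v₁)) 0) :
    ∀ s ∈ Set.Icc (0:ℝ) 1,
      F ((1 - s) • v₀ + s • v₁) - F v₀ ≤ M * s * max (F v₁ - F v₀) 0 :=
  stmt_14_general F v₀ v₁ t' ht' hlevel hbelow M hM hQQ
end
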